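/- Let (X,d,m) be an mm-space with m(X) = 1 satisfying CD(K,∞) for some K > 0. Then m ∈ P₂(X) and for every μ ∈ P₂(X): W₂(μ, m)² ≤ (2/K)·Ent(μ|m) (Talagrand inequality). -/

import Mathlib

/-!
Relative entropy with respect to a probability measure is nonnegative, so the CD(K,∞) inequality
along a geodesic from `μ` to `m` gives `(K/2) t (1-t) W₂(μ,m)² ≤ (1-t) Ent(μ|m)`; dividing by
`1 - t` and letting `t → 1` yields Talagrand's inequality.

That `m ∈ P₂` comes from the same inequality at `t = 1/2`, between the normalised restrictions
of `m` to a unit ball `B(x₀,1)` and to a bounded region `E` at distance `≥ r` from it: their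
entropies are `-log m(B)` and `-log m(E)`, so `m(B) m(E) ≤ exp(-K r²/4)`. This Gaussian
concentration makes `d(·,x₀)²` integrable.
-/

open MeasureTheory Filter Set Topology ENNReal
open scoped Classical

noncomputable section

/-- A coupling of two measures. -/
def IsCoupling {α β : Type*} [MeasurableSpace α] [MeasurableSpace β]
    (q : Measure (α × β)) (μ : Measure α) (ν : Measure β) : Prop :=
  Measure.map Prod.fst q = μ ∧ Measure.map Prod.snd q = ν

/-- Membership in the Wasserstein space `P₂`. -/
def MemP2 {α : Type*} [MetricSpace α] [MeasurableSpace α] (μ : Measure α) : Prop :=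
  IsProbabilityMeasure μ ∧ ∃ x₀ : α, ∫⁻ x, edist x x₀ ^ 2 ∂μ < ∞

/-- The squared Kantorovich–Wasserstein distance. -/
def Wsq {α : Type*} [MetricSpace α] [MeasurableSpace α] (μ ν : Measure α) : ℝ≥0∞ :=
  ⨅ (q : Measure (α × α)) (_ : IsCoupling q μ ν), ∫⁻ p, edist p.1 p.2 ^ 2 ∂q

/-- The Kantorovich–Wasserstein distance `W₂`. -/
def W2 {α : Type*} [MetricSpace α] [MeasurableSpace α] (μ ν : Measure α) : ℝ≥0∞ :=
  Wsq μ ν ^ (1/2 : ℝ)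

/-- A `W₂`-geodesic parametrized by `[0,1]`. -/
def IsW2Geodesic {α : Type*} [MetricSpace α] [MeasurableSpace α] (μ : ℝ → Measure α) : Prop :=
  ∀ s ∈ Icc (0:ℝ) 1, ∀ t ∈ Icc (0:ℝ) 1,
    W2 (μ s) (μ t) = ENNReal.ofReal |s - t| * W2 (μ 0) (μ 1)

/-- Integrand of the Boltzmann entropy. -/
def entFun {α : Type*} [MeasurableSpace α] (μ m : Measure α) (x : α) : ℝ :=
  (μ.rnDeriv m x).toReal * Real.log (μ.rnDeriv m x).toReal

/-- Boltzmann entropy `Ent(μ|m)`. -/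
def Ent {α : Type*} [MeasurableSpace α] (μ m : Measure α) : EReal :=
  if μ ≪ m ∧ Integrable (fun x => max (entFun μ m x) 0) m then
    ((∫ x, max (entFun μ m x) 0 ∂m : ℝ) : EReal)
      - ((∫⁻ x, ENNReal.ofReal (-(entFun μ m x)) ∂m : ℝ≥0∞) : EReal)
  else ⊤

/-- The CD(K,∞) convexity inequality along some geodesic from `μ₀` to `μ₁`. -/
def CDinftyFor {α : Type*} [MetricSpace α] [MeasurableSpace α]
    (K : ℝ) (m μ₀ μ₁ : Measure α) : Prop :=
  ∃ μ : ℝ → Measure α, μ 0 = μ₀ ∧ μ 1 = μ₁ ∧ IsW2Geodesic μ ∧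
    ∀ t ∈ Icc (0:ℝ) 1,
      Ent (μ t) m ≤ ((1 - t : ℝ) : EReal) * Ent μ₀ m + ((t : ℝ) : EReal) * Ent μ₁ m
        - ((K/2 * (t * (1-t)) : ℝ) : EReal) * ((Wsq μ₀ μ₁ : ℝ≥0∞) : EReal)

/-- The curvature-dimension condition CD(K,∞). -/
def CDinfty {α : Type*} [MetricSpace α] [MeasurableSpace α] (K : ℝ) (m : Measure α) : Prop :=
  ∀ μ₀ μ₁ : Measure α, MemP2 μ₀ → MemP2 μ₁ → CDinftyFor K m μ₀ μ₁

/-- Distortion coefficients `τ^{(t)}_{K,N}(θ)`. -/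
def tauCoef (K N t θ : ℝ) : ℝ≥0∞ :=
  if 0 < K then
    if Real.pi * Real.sqrt ((N-1)/K) ≤ θ then ∞
    else ENNReal.ofReal (t ^ (1/N) *
      (Real.sin (Real.sqrt (K/(N-1)) * (t * θ)) / Real.sin (Real.sqrt (K/(N-1)) * θ)) ^ ((N-1)/N))
  else if K = 0 then ENNReal.ofReal t
  else ENNReal.ofReal (t ^ (1/N) *
      (Real.sinh (Real.sqrt (-K/(N-1)) * (t * θ)) / Real.sinh (Real.sqrt (-K/(N-1)) * θ)) ^ ((N-1)/N))

/-- The CD(K,N) inequality along some geodesic/optimal coupling from `μ₀` to `μ₁`,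
with distortion coefficients `coef`. -/
def CDForWith {α : Type*} [MetricSpace α] [MeasurableSpace α]
    (coef : ℝ → ℝ → ℝ≥0∞) (N : ℝ) (m μ₀ μ₁ : Measure α) : Prop :=
  ∃ (μ : ℝ → Measure α) (q : Measure (α × α)),
    μ 0 = μ₀ ∧ μ 1 = μ₁ ∧ IsW2Geodesic μ ∧ (∀ t ∈ Icc (0:ℝ) 1, μ t ≪ m) ∧
    IsCoupling q μ₀ μ₁ ∧ (∫⁻ p, edist p.1 p.2 ^ 2 ∂q) = Wsq μ₀ μ₁ ∧
    ∀ t ∈ Icc (0:ℝ) 1,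
      ∫⁻ x, ((μ t).rnDeriv m x) ^ (1 - 1/N : ℝ) ∂m ≥
      ∫⁻ p, coef (1-t) (dist p.1 p.2) * (μ₀.rnDeriv m p.1) ^ (-(1/N) : ℝ)
            + coef t (dist p.1 p.2) * (μ₁.rnDeriv m p.2) ^ (-(1/N) : ℝ) ∂q

def CDFor {α : Type*} [MetricSpace α] [MeasurableSpace α]
    (K N : ℝ) (m μ₀ μ₁ : Measure α) : Prop :=
  CDForWith (fun t θ => tauCoef K N t θ) N m μ₀ μ₁

/-- The curvature-dimension condition CD(K,N). -/
def CD {α : Type*} [MetricSpace α] [MeasurableSpace α] (K N : ℝ) (m : Measure α) : Prop :=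
  ∀ μ₀ μ₁ : Measure α, MemP2 μ₀ → MemP2 μ₁ → μ₀ ≪ m → μ₁ ≪ m → CDFor K N m μ₀ μ₁

/-- The support of a measure on a topological space. -/
def mmSupp {α : Type*} [TopologicalSpace α] [MeasurableSpace α] (μ : Measure α) : Set α :=
  {x | ∀ U ∈ nhds x, 0 < μ U}

open ProbabilityTheory Metric

section Entropy

variable {α : Type*} [MeasurableSpace α] {μ m : Measure α}

lemma toReal_rnDeriv_sub_one_le_entFun (x : α) : (μ.rnDeriv m x).toReal - 1 ≤ entFun μ m x :=
  Real.self_sub_one_le_mul_log ENNReal.toReal_nonneg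

lemma neg_one_le_entFun (x : α) : -1 ≤ entFun μ m x := by
  linarith [toReal_rnDeriv_sub_one_le_entFun (μ := μ) (m := m) x,
    (μ.rnDeriv m x).toReal_nonneg]

lemma measurable_entFun : Measurable (entFun μ m) := by
  have h := (μ.measurable_rnDeriv m).ennreal_toReal
  exact h.mul (Real.measurable_log.comp h)

variable [IsFiniteMeasure m]

lemma lintegral_ofReal_neg_entFun_ne_top : ∫⁻ x, ENNReal.ofReal (-entFun μ m x) ∂m ≠ ∞ := by
  have hone : ∫⁻ _, (1 : ℝ≥0∞) ∂m < ∞ := by simp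
  refine ((lintegral_mono fun x => ?_).trans_lt hone).ne
  exact ENNReal.ofReal_le_one.2 (by linarith [neg_one_le_entFun (μ := μ) (m := m) x])

lemma integrable_entFun_iff :
    Integrable (entFun μ m) m ↔ Integrable (fun x => max (entFun μ m x) 0) m := by
  refine ⟨Integrable.pos_part, fun h => ?_⟩
  refine (h.add (integrable_const 1)).mono' measurable_entFun.aestronglyMeasurable
    (ae_of_all _ fun x => ?_)
  have := neg_one_le_entFun (μ := μ) (m := m) x
  rw [Pi.add_apply, Real.norm_eq_abs, abs_le]
  constructor <;> linarith [le_max_left (entFun μ m x) 0, le_max_right (entFun μ m x) 0]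

lemma ent_eq_integral (hac : μ ≪ m) (hint : Integrable (entFun μ m) m) :
    Ent μ m = ((∫ x, entFun μ m x ∂m : ℝ) : EReal) := by
  rw [Ent, if_pos ⟨hac, hint.pos_part⟩, integral_eq_lintegral_pos_part_sub_lintegral_neg_part hint,
    integral_eq_lintegral_of_nonneg_ae (f := fun x => max (entFun μ m x) 0)
      (ae_of_all _ fun x => le_max_right _ _)
      hint.pos_part.aestronglyMeasurable,
    ← EReal.coe_ennreal_toReal lintegral_ofReal_neg_entFun_ne_top, EReal.coe_sub]
  simp only [ENNReal.ofReal_max, ENNReal.ofReal_zero, max_zero]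

lemma ent_ne_bot : Ent μ m ≠ ⊥ := by
  rw [Ent]
  split_ifs
  · rw [← EReal.coe_ennreal_toReal lintegral_ofReal_neg_entFun_ne_top, ← EReal.coe_sub]
    exact EReal.coe_ne_bot _
  · exact top_ne_bot

lemma ent_nonneg [IsProbabilityMeasure μ] [IsProbabilityMeasure m] : 0 ≤ Ent μ m := by
  by_cases h : μ ≪ m ∧ Integrable (fun x => max (entFun μ m x) 0) m
  · have hint := integrable_entFun_iff.2 h.2
    rw [ent_eq_integral h.1 hint, EReal.coe_nonneg]
    have hle : ∫ x, ((μ.rnDeriv m x).toReal - 1) ∂m ≤ ∫ x, entFun μ m x ∂m :=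
      integral_mono (Measure.integrable_toReal_rnDeriv.sub (integrable_const 1)) hint
        toReal_rnDeriv_sub_one_le_entFun
    rw [integral_sub Measure.integrable_toReal_rnDeriv (integrable_const 1),
      Measure.integral_toReal_rnDeriv h.1] at hle
    simpa using hle
  · rw [Ent, if_neg h]
    exact le_top

lemma ent_self [IsProbabilityMeasure m] : Ent m m = 0 := by
  have hae : entFun m m =ᵐ[m] 0 := by
    filter_upwards [m.rnDeriv_self] with x hx
    simp [entFun, hx]
  rw [ent_eq_integral Measure.AbsolutelyContinuous.rfl
    ((integrable_congr hae).2 (integrable_zero _ _ _)), integral_congr_ae hae]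
  simp

lemma rnDeriv_cond_ae_eq {A : Set α} (hA : MeasurableSet A) (h0 : m A ≠ 0) :
    (m[|A]).rnDeriv m =ᵐ[m] A.indicator fun _ => (m A)⁻¹ := by
  filter_upwards [Measure.rnDeriv_smul_left_of_ne_top (m.restrict A) m (ENNReal.inv_ne_top.2 h0),
    Measure.rnDeriv_restrict_self m hA] with x hsmul hrestrict
  rw [ProbabilityTheory.cond, hsmul, Pi.smul_apply, hrestrict]
  by_cases hx : x ∈ A <;> simp [hx]

lemma ent_cond [IsProbabilityMeasure m] {A : Set α} (hA : MeasurableSet A) (h0 : m A ≠ 0) :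
    Ent (m[|A]) m = ((-Real.log (m A).toReal : ℝ) : EReal) := by
  set c : ℝ := (m A).toReal⁻¹
  have hfae : entFun (m[|A]) m =ᵐ[m] A.indicator fun _ => c * Real.log c := by
    filter_upwards [rnDeriv_cond_ae_eq hA h0] with x hx
    by_cases hxA : x ∈ A <;> simp [entFun, hx, hxA, c, ENNReal.toReal_inv]
  rw [ent_eq_integral cond_absolutelyContinuous
      ((integrable_congr hfae).2 ((integrable_const _).indicator hA)),
    integral_congr_ae hfae, integral_indicator_const _ hA, smul_eq_mul, measureReal_def]
  have hpos : 0 < (m A).toReal := ENNReal.toReal_pos h0 (measure_ne_top m A)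
  congr 1
  simp only [c, Real.log_inv]
  field_simp

end Entropy

section Coupling

variable {α β : Type*} [MeasurableSpace α] [MeasurableSpace β]
  {q : Measure (α × β)} {μ : Measure α} {ν : Measure β}

lemma IsCoupling.lintegral_comp_fst (hq : IsCoupling q μ ν) {f : α → ℝ≥0∞} (hf : Measurable f) :
    ∫⁻ p, f p.1 ∂q = ∫⁻ x, f x ∂μ := by
  rw [← hq.1, lintegral_map hf measurable_fst]

lemma IsCoupling.lintegral_comp_snd (hq : IsCoupling q μ ν) {f : β → ℝ≥0∞} (hf : Measurable f) :
    ∫⁻ p, f p.2 ∂q = ∫⁻ y, f y ∂ν := by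
  rw [← hq.2, lintegral_map hf measurable_snd]

lemma IsCoupling.measure_univ_eq_left (hq : IsCoupling q μ ν) : q univ = μ univ := by
  rw [← hq.1, Measure.map_apply measurable_fst MeasurableSet.univ, preimage_univ]

lemma IsCoupling.measure_univ_eq_right (hq : IsCoupling q μ ν) : q univ = ν univ := by
  rw [← hq.2, Measure.map_apply measurable_snd MeasurableSet.univ, preimage_univ]

lemma isCoupling_prod [IsProbabilityMeasure μ] [IsProbabilityMeasure ν] :
    IsCoupling (μ.prod ν) μ ν :=
  ⟨by simp, by simp⟩

end Coupling

lemma edist_sq_le_two_mul {E : Type*} [PseudoMetricSpace E] (x y z : E) :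
    edist x z ^ 2 ≤ 2 * (edist x y ^ 2 + edist y z ^ 2) := by
  simp only [edist_nndist]
  exact_mod_cast (pow_le_pow_left' (nndist_triangle x y z) 2).trans add_sq_le

section Wasserstein

variable {Y : Type*} [MetricSpace Y] [MeasurableSpace Y] {μ ν : Measure Y}

lemma wsq_le_lintegral {q : Measure (Y × Y)} (hq : IsCoupling q μ ν) :
    Wsq μ ν ≤ ∫⁻ p, edist p.1 p.2 ^ 2 ∂q :=
  iInf₂_le q hq

lemma exists_isCoupling_of_wsq_ne_top (h : Wsq μ ν ≠ ∞) : ∃ q, IsCoupling q μ ν := by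
  by_contra! hc
  exact h (by simp [Wsq, hc])

lemma IsW2Geodesic.isProbabilityMeasure {μ : ℝ → Measure Y} (hgeo : IsW2Geodesic μ)
    [IsProbabilityMeasure (μ 0)] (hW : Wsq (μ 0) (μ 1) ≠ ∞) {t : ℝ} (ht : t ∈ Icc (0 : ℝ) 1) :
    IsProbabilityMeasure (μ t) := by
  have hW2 : W2 (μ 0) (μ t) ≠ ∞ := by
    rw [hgeo 0 ⟨le_rfl, zero_le_one⟩ t ht, W2]
    exact ENNReal.mul_ne_top ofReal_ne_top (ENNReal.rpow_ne_top_of_nonneg (by norm_num) hW)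
  obtain ⟨q, hq⟩ := exists_isCoupling_of_wsq_ne_top (μ := μ 0) (ν := μ t) fun h =>
    hW2 (by rw [W2, h, ENNReal.top_rpow_of_pos (by norm_num)])
  exact ⟨by rw [← hq.measure_univ_eq_right, hq.measure_univ_eq_left, measure_univ]⟩

lemma ofReal_sq_le_wsq [IsProbabilityMeasure μ] {A B : Set Y} (hA : ∀ᵐ x ∂μ, x ∈ A)
    (hB : ∀ᵐ y ∂ν, y ∈ B) {r : ℝ} (hAB : ∀ a ∈ A, ∀ b ∈ B, r ≤ dist a b) :
    ENNReal.ofReal r ^ 2 ≤ Wsq μ ν := by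
  refine le_iInf₂ fun q hq => ?_
  have : IsProbabilityMeasure q := ⟨by rw [hq.measure_univ_eq_left, measure_univ]⟩
  have hA' : ∀ᵐ p ∂q, p.1 ∈ A := ae_of_ae_map measurable_fst.aemeasurable (hq.1 ▸ hA)
  have hB' : ∀ᵐ p ∂q, p.2 ∈ B := ae_of_ae_map measurable_snd.aemeasurable (hq.2 ▸ hB)
  calc ENNReal.ofReal r ^ 2 = ∫⁻ _, ENNReal.ofReal r ^ 2 ∂q := by simp
    _ ≤ ∫⁻ p, edist p.1 p.2 ^ 2 ∂q := by
        refine lintegral_mono_ae ((hA'.and hB').mono fun p hp => ?_)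
        rw [edist_dist]
        exact pow_le_pow_left' (ENNReal.ofReal_le_ofReal (hAB _ hp.1 _ hp.2)) 2

lemma memP2_cond {m : Measure Y} [IsFiniteMeasure m] {A : Set Y} (hA : MeasurableSet A)
    (hAb : Bornology.IsBounded A) (h0 : m A ≠ 0) : MemP2 (m[|A]) := by
  have := cond_isProbabilityMeasure (s := A) h0
  obtain ⟨x₀, -⟩ := nonempty_of_measure_ne_zero h0
  obtain ⟨r, hr⟩ := hAb.subset_closedBall x₀
  refine ⟨this, x₀, ?_⟩
  calc ∫⁻ x, edist x x₀ ^ 2 ∂m[|A] ≤ ∫⁻ _, ENNReal.ofReal r ^ 2 ∂m[|A] := by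
        refine lintegral_mono_ae ((ae_cond_mem hA).mono fun x hx => ?_)
        rw [edist_dist]
        exact pow_le_pow_left' (ENNReal.ofReal_le_ofReal (hr hx)) 2
    _ < ∞ := by simp

variable [BorelSpace Y]

lemma MemP2.lintegral_edist_sq_lt_top (h : MemP2 μ) (y : Y) : ∫⁻ x, edist x y ^ 2 ∂μ < ∞ := by
  obtain ⟨hprob, x₀, hx₀⟩ := h
  calc ∫⁻ x, edist x y ^ 2 ∂μ ≤ ∫⁻ x, 2 * (edist x x₀ ^ 2 + edist x₀ y ^ 2) ∂μ :=
        lintegral_mono fun x => edist_sq_le_two_mul x x₀ y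
    _ = 2 * (∫⁻ x, edist x x₀ ^ 2 ∂μ + edist x₀ y ^ 2 * μ univ) := by
        rw [lintegral_const_mul _ (by fun_prop), lintegral_add_right _ measurable_const,
          lintegral_const]
    _ < ∞ := by
        simp [ENNReal.mul_lt_top, hx₀, edist_lt_top x₀ y]

lemma wsq_lt_top (hμ : MemP2 μ) (hν : MemP2 ν) : Wsq μ ν < ∞ := by
  have := hμ.1
  have := hν.1
  obtain ⟨x₀, hx₀⟩ := hμ.2
  have hq : IsCoupling (μ.prod ν) μ ν := isCoupling_prod
  calc Wsq μ ν ≤ ∫⁻ p, edist p.1 p.2 ^ 2 ∂(μ.prod ν) := wsq_le_lintegral hq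
    _ ≤ ∫⁻ p, 2 * (edist p.1 x₀ ^ 2 + edist p.2 x₀ ^ 2) ∂(μ.prod ν) :=
        lintegral_mono fun p => by simpa [edist_comm x₀] using edist_sq_le_two_mul p.1 x₀ p.2
    _ = 2 * (∫⁻ x, edist x x₀ ^ 2 ∂μ + ∫⁻ y, edist y x₀ ^ 2 ∂ν) := by
        rw [lintegral_const_mul _ (by fun_prop), lintegral_add_left (by fun_prop),
          hq.lintegral_comp_fst (f := fun x => edist x x₀ ^ 2) (by fun_prop),
          hq.lintegral_comp_snd (f := fun y => edist y x₀ ^ 2) (by fun_prop)]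
    _ < ∞ := by
        simp [ENNReal.mul_lt_top, hx₀, hν.lintegral_edist_sq_lt_top x₀]

end Wasserstein

lemma lintegral_ofReal_sq_le_tsum {α : Type*} [MeasurableSpace α] (μ : Measure α) {f : α → ℝ}
    (hf : Measurable f) :
    ∫⁻ x, ENNReal.ofReal (f x) ^ 2 ∂μ ≤
      μ univ + ∑' n : ℕ, ((n : ℝ≥0∞) + 2) ^ 2 * μ {x | (n : ℝ) + 1 ≤ f x} := by
  have hmeas (n : ℕ) : MeasurableSet {x | (n : ℝ) + 1 ≤ f x} := measurableSet_le measurable_const hf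
  calc ∫⁻ x, ENNReal.ofReal (f x) ^ 2 ∂μ
      ≤ ∫⁻ x, 1 + ∑' n : ℕ,
          {x | (n : ℝ) + 1 ≤ f x}.indicator (fun _ => ((n : ℝ≥0∞) + 2) ^ 2) x ∂μ :=
        lintegral_mono fun x => ?_
    _ = _ := by
        rw [lintegral_add_left measurable_const, lintegral_one,
          lintegral_tsum fun n => (measurable_const.indicator (hmeas n)).aemeasurable]
        simp [lintegral_indicator (hmeas _)]
  rcases lt_or_ge (f x) 1 with h | h
  · exact (pow_le_one₀ zero_le (ENNReal.ofReal_le_one.2 h.le)).trans le_self_add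
  obtain ⟨n, hn⟩ : ∃ n, ⌊f x⌋₊ = n + 1 := Nat.exists_eq_add_of_le' (Nat.le_floor (by simpa))
  have hlow : (n : ℝ) + 1 ≤ f x := by exact_mod_cast hn ▸ Nat.floor_le (by linarith)
  have hup : f x ≤ (n : ℝ) + 2 := by
    have := Nat.lt_floor_add_one (f x)
    rw [hn] at this
    push_cast at this
    linarith
  refine le_add_left (le_trans ?_ (ENNReal.le_tsum n))
  rw [indicator_of_mem (show x ∈ {x | (n : ℝ) + 1 ≤ f x} from hlow)]
  refine pow_le_pow_left' ?_ 2
  calc ENNReal.ofReal (f x) ≤ ENNReal.ofReal ((n : ℝ) + 2) := ENNReal.ofReal_le_ofReal hup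
    _ = (n : ℝ≥0∞) + 2 := by rw [ENNReal.ofReal_add (by positivity) zero_le_two]; simp

lemma summable_add_two_sq_mul_exp_neg_mul_sq {c : ℝ} (hc : 0 < c) :
    Summable fun n : ℕ => ((n : ℝ) + 2) ^ 2 * Real.exp (-c * n ^ 2) := by
  have hshift : Summable fun n : ℕ => ((n + 2 : ℕ) : ℝ) ^ 2 * Real.exp (-c * (n + 2 : ℕ)) :=
    (summable_nat_add_iff 2).2 (Real.summable_pow_mul_exp_neg_nat_mul 2 hc)
  refine (hshift.mul_left (Real.exp (2 * c))).of_nonneg_of_le (fun n => by positivity) fun n => ?_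
  have hn : (n : ℝ) ≤ (n : ℝ) ^ 2 := by exact_mod_cast Nat.le_self_pow two_ne_zero n
  push_cast
  rw [mul_left_comm, ← Real.exp_add]
  gcongr
  nlinarith [mul_le_mul_of_nonneg_left hn hc.le]

section CurvatureDimension

variable {Y : Type*} [MetricSpace Y] [MeasurableSpace Y] {K : ℝ} {m : Measure Y}
  [IsProbabilityMeasure m]

lemma CDinftyFor.mul_toReal_wsq_le {μ₀ μ₁ : Measure Y} [IsProbabilityMeasure μ₀]
    (hcd : CDinftyFor K m μ₀ μ₁) (hW : Wsq μ₀ μ₁ ≠ ∞) {e₀ e₁ : ℝ}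
    (h₀ : Ent μ₀ m = e₀) (h₁ : Ent μ₁ m = e₁) {t : ℝ} (ht : t ∈ Icc (0 : ℝ) 1) :
    K / 2 * (t * (1 - t)) * (Wsq μ₀ μ₁).toReal ≤ (1 - t) * e₀ + t * e₁ := by
  obtain ⟨μ, rfl, rfl, hgeo, hconv⟩ := hcd
  have := hgeo.isProbabilityMeasure hW ht
  have h := ent_nonneg.trans (hconv t ht)
  rw [h₀, h₁, ← EReal.coe_ennreal_toReal hW] at h
  have h' : (0 : ℝ) ≤ (1 - t) * e₀ + t * e₁ - K / 2 * (t * (1 - t)) * (Wsq (μ 0) (μ 1)).toReal := by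
    exact_mod_cast h
  linarith

variable [BorelSpace Y]

lemma CDinfty.measure_mul_measure_le (hK : 0 ≤ K) (hCD : CDinfty K m) {A E : Set Y}
    (hA : MeasurableSet A) (hE : MeasurableSet E) (hAb : Bornology.IsBounded A)
    (hEb : Bornology.IsBounded E) {r : ℝ} (hr : 0 ≤ r) (hAE : ∀ a ∈ A, ∀ e ∈ E, r ≤ dist a e) :
    m A * m E ≤ ENNReal.ofReal (Real.exp (-(K / 4) * r ^ 2)) := by
  rcases eq_or_ne (m A) 0 with hA0 | hA0
  · simp [hA0]
  rcases eq_or_ne (m E) 0 with hE0 | hE0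
  · simp [hE0]
  have hA2 := memP2_cond hA hAb hA0
  have hE2 := memP2_cond hE hEb hE0
  have := hA2.1
  have hW := (wsq_lt_top hA2 hE2).ne
  have hconv := (hCD _ _ hA2 hE2).mul_toReal_wsq_le hW (ent_cond hA hA0) (ent_cond hE hE0)
    (t := 1 / 2) ⟨by norm_num, by norm_num⟩
  have hsep : r ^ 2 ≤ (Wsq (m[|A]) (m[|E])).toReal := by
    have := ENNReal.toReal_mono hW (ofReal_sq_le_wsq (ae_cond_mem hA) (ae_cond_mem hE) hAE)
    rwa [← ENNReal.ofReal_pow hr, ENNReal.toReal_ofReal (by positivity)] at this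
  have hApos := ENNReal.toReal_pos hA0 (measure_ne_top m A)
  have hEpos := ENNReal.toReal_pos hE0 (measure_ne_top m E)
  have hlog : Real.log ((m A).toReal * (m E).toReal) ≤ -(K / 4) * r ^ 2 := by
    rw [Real.log_mul hApos.ne' hEpos.ne']
    nlinarith [mul_le_mul_of_nonneg_left hsep hK]
  rw [← ofReal_toReal (measure_ne_top m A), ← ofReal_toReal (measure_ne_top m E),
    ← ENNReal.ofReal_mul toReal_nonneg]
  exact ENNReal.ofReal_le_ofReal ((Real.log_le_iff_le_exp (by positivity)).1 hlog)

lemma CDinfty.measure_le_dist_mul_measure_ball_le (hK : 0 ≤ K) (hCD : CDinfty K m) (x₀ : Y)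
    {r : ℝ} (hr : 0 ≤ r) :
    m {x | r + 1 ≤ dist x x₀} * m (ball x₀ 1) ≤ ENNReal.ofReal (Real.exp (-(K / 4) * r ^ 2)) := by
  set F := {x | r + 1 ≤ dist x x₀}
  have hF : MeasurableSet F := measurableSet_le measurable_const (by fun_prop)
  have hmono : Monotone fun n : ℕ => F ∩ ball x₀ n := fun i j hij =>
    inter_subset_inter_right _ (ball_subset_ball (by exact_mod_cast hij))
  rw [← inter_univ F, ← iUnion_ball_nat x₀, inter_iUnion, hmono.measure_iUnion, ENNReal.iSup_mul]
  refine iSup_le fun n => ?_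
  rw [mul_comm]
  refine hCD.measure_mul_measure_le hK measurableSet_ball (hF.inter measurableSet_ball)
    isBounded_ball (isBounded_ball.subset inter_subset_right) hr fun a ha y hy => ?_
  linarith [show r + 1 ≤ dist y x₀ from hy.1, mem_ball.1 ha, dist_triangle y a x₀, dist_comm a y]

lemma CDinfty.memP2 [TopologicalSpace.SeparableSpace Y] (hK : 0 < K) (hCD : CDinfty K m) :
    MemP2 m := by
  have : SecondCountableTopology Y := UniformSpace.secondCountable_of_separable Y
  obtain ⟨x₀, hx₀⟩ := m.nonempty_support (IsProbabilityMeasure.ne_zero m)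
  have hball : m (ball x₀ 1) ≠ 0 :=
    ((Measure.mem_support_iff_forall x₀).1 hx₀ _ (ball_mem_nhds x₀ one_pos)).ne'
  have htail : ∑' n : ℕ, ((n : ℝ≥0∞) + 2) ^ 2 * m {x | (n : ℝ) + 1 ≤ dist x x₀} < ∞ := by
    refine ENNReal.lt_top_of_mul_ne_top_left (ne_of_lt ?_) hball
    rw [← ENNReal.tsum_mul_right]
    calc ∑' n : ℕ, ((n : ℝ≥0∞) + 2) ^ 2 * m {x | (n : ℝ) + 1 ≤ dist x x₀} * m (ball x₀ 1)
        ≤ ∑' n : ℕ, ENNReal.ofReal (((n : ℝ) + 2) ^ 2 * Real.exp (-(K / 4) * n ^ 2)) := by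
          refine ENNReal.tsum_le_tsum fun n => ?_
          rw [mul_assoc, ENNReal.ofReal_mul (by positivity), ENNReal.ofReal_pow (by positivity),
            ENNReal.ofReal_add (by positivity) zero_le_two]
          simp only [ofReal_natCast, ofReal_ofNat]
          gcongr
          exact hCD.measure_le_dist_mul_measure_ball_le hK.le x₀ n.cast_nonneg
      _ = ENNReal.ofReal (∑' n : ℕ, ((n : ℝ) + 2) ^ 2 * Real.exp (-(K / 4) * n ^ 2)) :=
          (ENNReal.ofReal_tsum_of_nonneg (fun n => by positivity)
            (summable_add_two_sq_mul_exp_neg_mul_sq (by positivity))).symm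
      _ < ∞ := ENNReal.ofReal_lt_top
  refine ⟨inferInstance, x₀, ?_⟩
  calc ∫⁻ x, edist x x₀ ^ 2 ∂m
      ≤ m univ + ∑' n : ℕ, ((n : ℝ≥0∞) + 2) ^ 2 * m {x | (n : ℝ) + 1 ≤ dist x x₀} := by
        simpa only [edist_dist] using lintegral_ofReal_sq_le_tsum m (f := fun x => dist x x₀)
          (by fun_prop)
    _ < ∞ := ENNReal.add_lt_top.2 ⟨measure_lt_top _ _, htail⟩

end CurvatureDimension

theorem talagrand_inequality_general
    {X : Type*} [MetricSpace X] [TopologicalSpace.SeparableSpace X]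
    [MeasurableSpace X] [BorelSpace X] (m : Measure X) [IsProbabilityMeasure m]
    (K : ℝ) (hK : 0 < K) (hCD : CDinfty K m) :
    MemP2 m ∧
    ∀ μ : Measure X, MemP2 μ →
      ((Wsq μ m : ℝ≥0∞) : EReal) ≤ ((2 / K : ℝ) : EReal) * Ent μ m := by
  have hm : MemP2 m := hCD.memP2 hK
  refine ⟨hm, fun μ hμ => ?_⟩
  have := hμ.1
  rcases eq_or_ne (Ent μ m) ⊤ with htop | htop
  · rw [htop, EReal.coe_mul_top_of_pos (by positivity)]
    exact le_top
  set e := (Ent μ m).toReal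
  have he : Ent μ m = e := (EReal.coe_toReal htop ent_ne_bot).symm
  have hW := (wsq_lt_top hμ hm).ne
  set w := (Wsq μ m).toReal
  have hbound : ∀ t ∈ Ioo (0 : ℝ) 1, t * (K / 2 * w) ≤ e := fun t ht => by
    have := (hCD μ m hμ hm).mul_toReal_wsq_le hW he (by rw [ent_self]; rfl) ⟨ht.1.le, ht.2.le⟩
    nlinarith [ht.2]
  have hlim : K / 2 * w ≤ e := by
    have htends : Tendsto (fun t : ℝ => t * (K / 2 * w)) (𝓝[<] 1) (𝓝 (K / 2 * w)) := by
      simpa using tendsto_nhdsWithin_of_tendsto_nhds ((continuous_mul_const (K / 2 * w)).tendsto 1)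
    refine le_of_tendsto htends ?_
    filter_upwards [Ioo_mem_nhdsLT zero_lt_one] with t ht using hbound t ht
  rw [← EReal.coe_ennreal_toReal hW, he, ← EReal.coe_mul, EReal.coe_le_coe_iff]
  calc w = 2 / K * (K / 2 * w) := by field_simp
    _ ≤ 2 / K * e := by gcongr

/-- **Talagrand inequality** under CD(K,∞), `K > 0`: `W₂(μ,m)² ≤ (2/K)·Ent(μ|m)`. -/
theorem talagrand_inequality
    {X : Type*} [MetricSpace X] [CompleteSpace X] [TopologicalSpace.SeparableSpace X]
    [MeasurableSpace X] [BorelSpace X] (m : Measure X) [IsProbabilityMeasure m]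
    (K : ℝ) (hK : 0 < K) (hCD : CDinfty K m) :
    MemP2 m ∧
    ∀ μ : Measure X, MemP2 μ →
      ((Wsq μ m : ℝ≥0∞) : EReal) ≤ ((2 / K : ℝ) : EReal) * Ent μ m :=
  talagrand_inequality_general m K hK hCD
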